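/- Suppose ε ∈ (0,1), κ = 1−ε, and p_n = (ln n + (k−1) ln ln n − ω_n)/(κ n) with ω_n → ∞ and ω_n = o(ln n). Then for every sequence of integers s_n with |s_n − κn| ≤ n^{2/3}, the quantity α_{s_n} defined by p_n = (ln s_n + (k−1) ln ln s_n + α_{s_n})/s_n satisfies α_{s_n} → −∞. -/

import Mathlib

/-!
Write `r_n = s_n / (κ n)`, so that `r_n - 1 = O(n^{-1/3})`, and `L_n = ln n + (k-1) ln ln n`.
Then
`α_{s_n} = L_n (r_n - 1) - (ln s_n - ln n) - (k-1) (ln ln s_n - ln ln n) - ω_n r_n`.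
The first term is `O(ln n · n^{-1/3}) → 0`, the next two converge to `-ln κ` and `0` because
`s_n / n → κ`, and the last one tends to `-∞` because `ω_n → ∞` while `r_n → 1`.
-/

open Filter Real Asymptotics Topology

section LogComparison

variable {α : Type*} {l : Filter α} {f g : α → ℝ} {c : ℝ}

lemma tendsto_log_sub_log_of_tendsto_div (hfg : Tendsto (fun x => f x / g x) l (𝓝 c))
    (hc : 0 < c) : Tendsto (fun x => log (f x) - log (g x)) l (𝓝 (log c)) := by
  refine ((continuousAt_log hc.ne').tendsto.comp hfg).congr' ?_
  filter_upwards [hfg.eventually_ne hc.ne'] with x hx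
  obtain ⟨hf, hg⟩ := div_ne_zero_iff.mp hx
  exact log_div hf hg

lemma tendsto_div_of_tendsto_sub_of_tendsto_atTop (hfg : Tendsto (fun x => f x - g x) l (𝓝 c))
    (hg : Tendsto g l atTop) : Tendsto (fun x => f x / g x) l (𝓝 1) := by
  have hrel : Tendsto (fun x => 1 + (f x - g x) / g x) l (𝓝 (1 + 0)) :=
    tendsto_const_nhds.add (hfg.div_atTop hg)
  rw [add_zero] at hrel
  refine hrel.congr' ?_
  filter_upwards [hg.eventually_gt_atTop 0] with x hx
  field_simp
  ring

lemma tendsto_log_log_sub_log_log (hfg : Tendsto (fun x => log (f x) - log (g x)) l (𝓝 c))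
    (hg : Tendsto g l atTop) :
    Tendsto (fun x => log (log (f x)) - log (log (g x))) l (𝓝 0) := by
  simpa using tendsto_log_sub_log_of_tendsto_div
    (tendsto_div_of_tendsto_sub_of_tendsto_atTop hfg (tendsto_log_atTop.comp hg)) one_pos

end LogComparison

lemma tendsto_log_mul_rpow_atTop {r : ℝ} (hr : r < 0) :
    Tendsto (fun x => log x * x ^ r) atTop (𝓝 0) :=
  (isLittleO_log_rpow_atTop (neg_pos.2 hr)).tendsto_div_nhds_zero.congr' <|
    (eventually_gt_atTop 0).mono fun x hx => by rw [rpow_neg hx.le, div_inv_eq_mul]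

lemma isBigO_log_add_mul_log_log (c : ℝ) :
    (fun x => log x + c * log (log x)) =O[atTop] log :=
  (isBigO_refl _ _).add
    ((isLittleO_log_id_atTop.comp_tendsto tendsto_log_atTop).isBigO.const_mul_left c)

section SurvivalSize

variable {S : ℕ → ℝ} {κ a : ℝ}

lemma isBigO_div_mul_sub_one_of_abs_sub_le (hκ : κ ≠ 0)
    (hS : ∀ n, |S n - κ * n| ≤ (n : ℝ) ^ a) :
    (fun n : ℕ => S n / (κ * n) - 1) =O[atTop] fun n : ℕ => (n : ℝ) ^ (a - 1) := by
  refine .of_bound |κ|⁻¹ ?_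
  filter_upwards [eventually_gt_atTop 0] with n hn
  have hn' : (0 : ℝ) < n := Nat.cast_pos.mpr hn
  have hκn : κ * n ≠ 0 := mul_ne_zero hκ hn'.ne'
  rw [norm_of_nonneg (rpow_nonneg hn'.le _), rpow_sub_one hn'.ne', Real.norm_eq_abs,
    div_sub_one hκn, abs_div, abs_mul, Nat.abs_cast, div_le_iff₀ (by positivity)]
  calc |S n - κ * n| ≤ (n : ℝ) ^ a := hS n
    _ = |κ|⁻¹ * ((n : ℝ) ^ a / n) * (|κ| * n) := by field_simp

lemma tendsto_div_mul_of_abs_sub_le (hκ : κ ≠ 0) (ha : a < 1)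
    (hS : ∀ n, |S n - κ * n| ≤ (n : ℝ) ^ a) :
    Tendsto (fun n : ℕ => S n / (κ * n)) atTop (𝓝 1) := by
  have hsmall := (isBigO_div_mul_sub_one_of_abs_sub_le hκ hS).trans_tendsto
    ((tendsto_rpow_neg_atTop (by linarith : 0 < 1 - a)).comp tendsto_natCast_atTop_atTop
      |>.congr fun n => by simp)
  simpa using hsmall.add_const 1

/-- For `c = k - 1` and `S = s`, this is `α_{s_n} + ω_n s_n / (κ n)`. -/
lemma tendsto_offset_add_drift_of_abs_sub_le (hκ : 0 < κ) (ha : a < 1) (c : ℝ)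
    (hS : ∀ n, |S n - κ * n| ≤ (n : ℝ) ^ a) :
    Tendsto (fun n : ℕ => (log n + c * log (log n)) * (S n / (κ * n) - 1)
        - (log (S n) - log n) - c * (log (log (S n)) - log (log n))) atTop (𝓝 (-log κ)) := by
  have hratio := tendsto_div_mul_of_abs_sub_le hκ.ne' ha hS
  have hquot : Tendsto (fun n : ℕ => S n / n) atTop (𝓝 κ) := by
    refine (by simpa using hratio.const_mul κ : Tendsto (fun n : ℕ => κ * (S n / (κ * n))) _ _)
      |>.congr' ?_
    filter_upwards [eventually_gt_atTop 0] with n hn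
    field_simp
  have hlog := tendsto_log_sub_log_of_tendsto_div hquot hκ
  have hloglog := tendsto_log_log_sub_log_log hlog tendsto_natCast_atTop_atTop
  have herror : Tendsto (fun n : ℕ => (log n + c * log (log n)) * (S n / (κ * n) - 1))
      atTop (𝓝 0) :=
    (((isBigO_log_add_mul_log_log c).comp_tendsto tendsto_natCast_atTop_atTop).mul
      (isBigO_div_mul_sub_one_of_abs_sub_le hκ.ne' hS)).trans_tendsto
      ((tendsto_log_mul_rpow_atTop (by linarith : a - 1 < 0)).comp tendsto_natCast_atTop_atTop)
  simpa using (herror.sub hlog).sub (hloglog.const_mul c)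

end SurvivalSize

theorem subcritical_offset_general (ε : ℝ) (hε : ε ∈ Set.Ioo (0 : ℝ) 1) (k : ℕ)
    (ω : ℕ → ℝ) (hω : Tendsto ω atTop atTop)
    (s : ℕ → ℕ) (hs : ∀ n, |(s n : ℝ) - (1 - ε) * n| ≤ (n : ℝ) ^ ((2 : ℝ)/3)) :
    Tendsto (fun n : ℕ =>
        ((Real.log n + (k - 1 : ℝ) * Real.log (Real.log n) - ω n) / ((1 - ε) * n))
            * (s n : ℝ)
          - Real.log (s n) - (k - 1 : ℝ) * Real.log (Real.log (s n)))
      atTop atBot := by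
  have hκ : 0 < 1 - ε := by linarith [hε.2]
  have ha : (2 : ℝ) / 3 < 1 := by norm_num
  have hbounded := tendsto_offset_add_drift_of_abs_sub_le hκ ha (k - 1 : ℝ) hs
  have hdrift : Tendsto (fun n => -(ω n * (s n / ((1 - ε) * n)))) atTop atBot :=
    tendsto_neg_atBot_iff.mpr <|
      hω.atTop_mul_pos one_pos (tendsto_div_mul_of_abs_sub_le hκ.ne' ha hs)
  refine (hbounded.add_atBot hdrift).congr fun n => ?_
  ring

/-- Subcritical regime: below the shifted threshold
`p_n = (ln n + (k-1) ln ln n + ω_n)/(κ n)` with `ω_n → ∞`, `ω_n = o(ln n)`,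
every typical survival size `s_n ≈ κ n` has threshold offset
`α_{s_n} = p_n s_n - ln s_n - (k-1) ln ln s_n` tending to `-∞`. -/
theorem subcritical_offset (ε : ℝ) (hε : ε ∈ Set.Ioo (0 : ℝ) 1) (k : ℕ) (hk : 1 ≤ k)
    (ω : ℕ → ℝ) (hω : Tendsto ω atTop atTop)
    (hωo : Tendsto (fun n => ω n / Real.log n) atTop (nhds 0))
    (s : ℕ → ℕ) (hs : ∀ n, |(s n : ℝ) - (1 - ε) * n| ≤ (n : ℝ) ^ ((2 : ℝ)/3)) :
    Tendsto (fun n : ℕ =>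
        ((Real.log n + (k - 1 : ℝ) * Real.log (Real.log n) - ω n) / ((1 - ε) * n))
            * (s n : ℝ)
          - Real.log (s n) - (k - 1 : ℝ) * Real.log (Real.log (s n)))
      atTop atBot :=
  subcritical_offset_general ε hε k ω hω s hs
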